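/- Fix σ > 0 and s₁, s₂ > 0, write L = log(s₁/s₂), and for τ > 0 set d₊(τ) = (L + σ²τ/2)/(σ√τ) and Γ₁₂(τ) = −N'(d₊(τ))/(σ·s₂·√τ). Then Γ₁₂ is differentiable in τ on (0,∞) and its derivative (the Colour₁₂ of the Margrabe Exchange Option) equals −(Γ₁₂(τ)/(8σ²τ²))·(σ⁴τ² + 4σ²τ − 4L²). -/

import Mathlib

open Real Filter Topology MeasureTheory

/-- Standard normal density `N'(x) = (1/√(2π))·exp(−x²/2)`. -/
noncomputable def stdGaussianPDF (x : ℝ) : ℝ :=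
  (Real.sqrt (2 * Real.pi))⁻¹ * Real.exp (-x ^ 2 / 2)

/-- Standard normal cumulative distribution function `N`. -/
noncomputable def stdGaussianCDF (x : ℝ) : ℝ :=
  ∫ t in Set.Iic x, stdGaussianPDF t

/-! Since `N''(x) = -x N'(x)`, the logarithmic derivative of `Γ₁₂ = -N'(d₊)/(σ s₂ √τ)` is
`-d₊ d₊' - 1/(2τ)`. With `d₊' = (σ²τ - 2L)/(4στ√τ)` one gets `d₊ d₊' = (σ⁴τ² - 4L²)/(8σ²τ²)`,
and adding `1/(2τ) = 4σ²τ/(8σ²τ²)` gives the stated factor. -/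

theorem hasDerivAt_stdGaussianPDF (x : ℝ) :
    HasDerivAt stdGaussianPDF (-x * stdGaussianPDF x) x := by
  have hexponent : HasDerivAt (fun x : ℝ => -x ^ 2 / 2) (-x) x :=
    ((hasDerivAt_pow 2 x).fun_neg.div_const 2).congr_deriv (by ring)
  refine (hexponent.exp.const_mul (Real.sqrt (2 * Real.pi))⁻¹).congr_deriv ?_
  rw [stdGaussianPDF]
  ring

theorem HasDerivAt.stdGaussianPDF {f : ℝ → ℝ} {f' x : ℝ} (hf : HasDerivAt f f' x) :
    HasDerivAt (fun y => stdGaussianPDF (f y)) (-f x * stdGaussianPDF (f x) * f') x :=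
  (hasDerivAt_stdGaussianPDF (f x)).comp x hf

/-- `d₊(τ)` of the Margrabe formula, with `L = log(s₁/s₂)`. -/
noncomputable def dPlus (L σ τ : ℝ) : ℝ := (L + σ ^ 2 * τ / 2) / (σ * Real.sqrt τ)

theorem hasDerivAt_dPlus (L : ℝ) {σ τ : ℝ} (hσ : σ ≠ 0) (hτ : 0 < τ) :
    HasDerivAt (dPlus L σ) ((σ ^ 2 * τ - 2 * L) / (4 * σ * τ * Real.sqrt τ)) τ := by
  have hsqrt_pos : 0 < Real.sqrt τ := Real.sqrt_pos.mpr hτ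
  have hnum : HasDerivAt (fun τ : ℝ => L + σ ^ 2 * τ / 2) (σ ^ 2 / 2) τ := by
    simpa using (((hasDerivAt_id τ).const_mul (σ ^ 2)).div_const 2).const_add L
  refine (hnum.fun_div ((Real.hasDerivAt_sqrt hτ.ne').const_mul σ)
    (mul_ne_zero hσ hsqrt_pos.ne')).congr_deriv ?_
  obtain ⟨u, hu, rfl⟩ : ∃ u, 0 < u ∧ τ = u ^ 2 := ⟨_, hsqrt_pos, (Real.sq_sqrt hτ.le).symm⟩
  rw [Real.sqrt_sq hu.le]
  field_simp
  ring

theorem dPlus_mul_deriv_dPlus_add_one_div (L : ℝ) {σ τ : ℝ} (hσ : σ ≠ 0) (hτ : 0 < τ) :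
    dPlus L σ τ * ((σ ^ 2 * τ - 2 * L) / (4 * σ * τ * Real.sqrt τ)) + 1 / (2 * τ) =
      (σ ^ 4 * τ ^ 2 + 4 * σ ^ 2 * τ - 4 * L ^ 2) / (8 * σ ^ 2 * τ ^ 2) := by
  obtain ⟨u, hu, rfl⟩ : ∃ u, 0 < u ∧ τ = u ^ 2 :=
    ⟨_, Real.sqrt_pos.mpr hτ, (Real.sq_sqrt hτ.le).symm⟩
  rw [dPlus, Real.sqrt_sq hu.le]
  field_simp
  ring

theorem hasDerivAt_neg_stdGaussianPDF_div_mul_sqrt {d : ℝ → ℝ} {d' k τ : ℝ}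
    (hd : HasDerivAt d d' τ) (hk : k ≠ 0) (hτ : 0 < τ) :
    HasDerivAt (fun τ => -(stdGaussianPDF (d τ) / (k * Real.sqrt τ)))
      (-(stdGaussianPDF (d τ) / (k * Real.sqrt τ)) * (-(d τ * d') - 1 / (2 * τ))) τ := by
  have hsqrt_pos : 0 < Real.sqrt τ := Real.sqrt_pos.mpr hτ
  refine (hd.stdGaussianPDF.fun_div ((Real.hasDerivAt_sqrt hτ.ne').const_mul k)
    (mul_ne_zero hk hsqrt_pos.ne')).fun_neg.congr_deriv ?_
  obtain ⟨u, hu, rfl⟩ : ∃ u, 0 < u ∧ τ = u ^ 2 := ⟨_, hsqrt_pos, (Real.sq_sqrt hτ.le).symm⟩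
  rw [Real.sqrt_sq hu.le]
  field_simp

theorem margrabe_colour_one_two_general (σ s₁ s₂ : ℝ) (hσ : 0 < σ) (hs₂ : 0 < s₂) :
    ∀ τ : ℝ, 0 < τ →
      HasDerivAt
        (fun τ : ℝ =>
          -(stdGaussianPDF ((Real.log (s₁ / s₂) + σ ^ 2 * τ / 2) / (σ * Real.sqrt τ)) /
            (σ * s₂ * Real.sqrt τ)))
        (-(-(stdGaussianPDF ((Real.log (s₁ / s₂) + σ ^ 2 * τ / 2) / (σ * Real.sqrt τ)) /
            (σ * s₂ * Real.sqrt τ)) / (8 * σ ^ 2 * τ ^ 2)) *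
          (σ ^ 4 * τ ^ 2 + 4 * σ ^ 2 * τ - 4 * Real.log (s₁ / s₂) ^ 2)) τ := by
  intro τ hτ
  have hΓ := hasDerivAt_neg_stdGaussianPDF_div_mul_sqrt
    (hasDerivAt_dPlus (Real.log (s₁ / s₂)) hσ.ne' hτ) (mul_ne_zero hσ.ne' hs₂.ne') hτ
  rw [← neg_add', dPlus_mul_deriv_dPlus_add_one_div _ hσ.ne' hτ] at hΓ
  refine hΓ.congr_deriv ?_
  unfold dPlus
  ring

/-- `Γ₁₂(τ) = −N'(d₊(τ))/(σ·s₂·√τ)` is differentiable in `τ` on `(0,∞)` with derivative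
(the Colour₁₂) `−(Γ₁₂(τ)/(8σ²τ²))·(σ⁴τ² + 4σ²τ − 4L²)`, where `L = log(s₁/s₂)`. -/
theorem margrabe_colour_one_two (σ s₁ s₂ : ℝ) (hσ : 0 < σ) (hs₁ : 0 < s₁) (hs₂ : 0 < s₂) :
    ∀ τ : ℝ, 0 < τ →
      HasDerivAt
        (fun τ : ℝ =>
          -(stdGaussianPDF ((Real.log (s₁ / s₂) + σ ^ 2 * τ / 2) / (σ * Real.sqrt τ)) /
            (σ * s₂ * Real.sqrt τ)))
        (-(-(stdGaussianPDF ((Real.log (s₁ / s₂) + σ ^ 2 * τ / 2) / (σ * Real.sqrt τ)) /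
            (σ * s₂ * Real.sqrt τ)) / (8 * σ ^ 2 * τ ^ 2)) *
          (σ ^ 4 * τ ^ 2 + 4 * σ ^ 2 * τ - 4 * Real.log (s₁ / s₂) ^ 2)) τ :=
  margrabe_colour_one_two_general σ s₁ s₂ hσ hs₂
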